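/- arXiv:2008.04026 — 3 statements merged into one kernel-verified Lean document; each statement's English description precedes it below -/
import Mathlib

section
/- Let (A,*) be a right alternative superalgebra, with super-Jordan product x ∘ y = (1/2)(x*y + (-1)^{|x||y|} y*x) and supercommutator [x,y] = (1/2)(x*y - (-1)^{|x||y|} y*x). Then for all homogeneous x,y,z: 2(-1)^{|x|(|y|+|z|)}((y∘z)∘x - y∘(z∘x)) = 2[[x,y],z] - (-1)^{|z|(|x|+|y|)}((z*x)*y - z*(x*y)). -/
def sgn (K : Type*) [Field K] (i j : ZMod 2) : K := (-1 : K) ^ (i * j).val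

def IsBilin (K : Type*) {A : Type*} [Field K] [AddCommGroup A] [Module K A]
    (f : A → A → A) : Prop :=
  (∀ (c : K) (x y : A), f (c • x) y = c • f x y) ∧
  (∀ x x' y : A, f (x + x') y = f x y + f x' y) ∧
  (∀ (c : K) (x y : A), f x (c • y) = c • f x y) ∧
  (∀ x y y' : A, f x (y + y') = f x y + f x y')

def IsTrilin (K : Type*) {A : Type*} [Field K] [AddCommGroup A] [Module K A]
    (f : A → A → A → A) : Prop :=
  (∀ (c : K) (x y z : A), f (c • x) y z = c • f x y z) ∧
  (∀ x x' y z : A, f (x + x') y z = f x y z + f x' y z) ∧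
  (∀ (c : K) (x y z : A), f x (c • y) z = c • f x y z) ∧
  (∀ x y y' z : A, f x (y + y') z = f x y z + f x y' z) ∧
  (∀ (c : K) (x y z : A), f x y (c • z) = c • f x y z) ∧
  (∀ x y z z' : A, f x y (z + z') = f x y z + f x y z')

def asc {A : Type*} [AddCommGroup A] (mul : A → A → A) (x y z : A) : A :=
  mul (mul x y) z - mul x (mul y z)

def hasc {A : Type*} [AddCommGroup A] (mul : A → A → A) (α : A → A) (x y z : A) : A :=
  mul (mul x y) (α z) - mul (α x) (mul y z)

def br (K : Type*) {A : Type*} [Field K] [AddCommGroup A] [Module K A]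
    (mul : A → A → A) (i j : ZMod 2) (x y : A) : A :=
  (2 : K)⁻¹ • (mul x y - sgn K i j • mul y x)

def jp (K : Type*) {A : Type*} [Field K] [AddCommGroup A] [Module K A]
    (mul : A → A → A) (i j : ZMod 2) (x y : A) : A :=
  (2 : K)⁻¹ • (mul x y + sgn K i j • mul y x)

/-!
Expanding the super-Jordan products and supercommutators turns both sides into combinations of
the twelve products of `x`, `y`, `z`. Writing `p`, `q`, `r` for the signs of the pairs `(x, y)`,
`(y, z)`, `(x, z)`, the difference of the two sides is `-q/2`, `pr/2` and `pqr/2` times the right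
alternativity relations for `(x, z, y)`, `(y, z, x)` and `(z, y, x)`; the coefficients only have
to be matched modulo `p² = q² = r² = 1`.
-/

section Sign

variable (K : Type*) [Field K]

theorem sgn_comm (i j : ZMod 2) : sgn K i j = sgn K j i := by
  rw [sgn, sgn, mul_comm]

theorem sgn_add_right (i j k : ZMod 2) : sgn K i (j + k) = sgn K i j * sgn K i k := by
  rw [sgn, sgn, sgn, ← pow_add, mul_add, ZMod.val_add, ← neg_one_pow_eq_pow_mod_two]

theorem sgn_add_left (i j k : ZMod 2) : sgn K (i + j) k = sgn K i k * sgn K j k := by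
  rw [sgn_comm, sgn_add_right, sgn_comm K k, sgn_comm K k]

theorem sgn_mul_self (i j : ZMod 2) : sgn K i j * sgn K i j = 1 := by
  rw [sgn, ← pow_add, ← two_mul, pow_mul, neg_one_sq, one_pow]

end Sign

theorem IsBilin.exists_linearMap₂ {K A : Type*} [Field K] [AddCommGroup A] [Module K A]
    {mul : A → A → A} (h : IsBilin K mul) : ∃ B : A →ₗ[K] A →ₗ[K] A, mul = fun x y => B x y :=
  ⟨LinearMap.mk₂ K mul h.2.1 h.1 h.2.2.2 h.2.2.1, rfl⟩

theorem stmt2_general {K A : Type*} [Field K] [AddCommGroup A] [Module K A]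
    (h2 : (2 : K) ≠ 0)
    (𝒜 : ZMod 2 → Submodule K A)
    (mul : A → A → A) (hbil : IsBilin K mul)
    (halt : ∀ (i j k : ZMod 2) (x y z : A), x ∈ 𝒜 i → y ∈ 𝒜 j → z ∈ 𝒜 k →
      asc mul x y z = (-(sgn K j k)) • asc mul x z y)
    (i j k : ZMod 2) (x y z : A)
    (hx : x ∈ 𝒜 i) (hy : y ∈ 𝒜 j) (hz : z ∈ 𝒜 k) :
    (2 : K) • sgn K i (j + k) •
        (jp K mul (j + k) i (jp K mul j k y z) x - jp K mul j (k + i) y (jp K mul k i z x))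
      = (2 : K) • br K mul (i + j) k (br K mul i j x y) z
        - sgn K k (i + j) • (mul (mul z x) y - mul z (mul x y)) := by
  have hxzy := halt i k j x z y hx hz hy
  have hyzx := halt j k i y z x hy hz hx
  have hzyx := halt k j i z y x hz hy hx
  obtain ⟨B, rfl⟩ := hbil.exists_linearMap₂
  have hp := sgn_mul_self K i j
  have hq := sgn_mul_self K j k
  have hr := sgn_mul_self K i k
  simp only [asc, jp, br, map_add, map_sub, map_smul, LinearMap.add_apply, LinearMap.sub_apply,
    LinearMap.smul_apply, smul_add, smul_sub, smul_smul, sgn_add_right, sgn_add_left,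
    sgn_comm K k i, sgn_comm K k j, sgn_comm K j i] at hxzy hyzx hzyx ⊢
  generalize sgn K i j = p at *
  generalize sgn K j k = q at *
  generalize sgn K i k = r at *
  linear_combination (norm := skip)
    (-(2 : K)⁻¹ * q) • hxzy + ((2 : K)⁻¹ * p * r) • hyzx + ((2 : K)⁻¹ * p * q * r) • hzyx
  match_scalars <;> grind

/-- Lemma 3.1: alternative expression of the ternary operation in a right
alternative superalgebra. -/
theorem stmt2 {K A : Type*} [Field K] [AddCommGroup A] [Module K A]
    (h2 : (2 : K) ≠ 0) (h3 : (3 : K) ≠ 0)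
    (𝒜 : ZMod 2 → Submodule K A) (hds : DirectSum.IsInternal 𝒜)
    (mul : A → A → A) (hbil : IsBilin K mul)
    (hgr : ∀ (i j : ZMod 2) (x y : A), x ∈ 𝒜 i → y ∈ 𝒜 j → mul x y ∈ 𝒜 (i + j))
    (halt : ∀ (i j k : ZMod 2) (x y z : A), x ∈ 𝒜 i → y ∈ 𝒜 j → z ∈ 𝒜 k →
      asc mul x y z = (-(sgn K j k)) • asc mul x z y)
    (i j k : ZMod 2) (x y z : A)
    (hx : x ∈ 𝒜 i) (hy : y ∈ 𝒜 j) (hz : z ∈ 𝒜 k) :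
    (2 : K) • sgn K i (j + k) •
        (jp K mul (j + k) i (jp K mul j k y z) x - jp K mul j (k + i) y (jp K mul k i z x))
      = (2 : K) • br K mul (i + j) k (br K mul i j x y) z
        - sgn K k (i + j) • (mul (mul z x) y - mul z (mul x y)) :=
  stmt2_general h2 𝒜 mul hbil halt i j k x y z hx hy hz
end

section
/- Let (V,⟨·,·,·⟩,α) be a multiplicative Hom-Jordan supertriple system and β an even self-morphism of it commuting with α. For n ≥ 0, define ⟨x,y,z⟩_{β^n} := β^n(⟨x,y,z⟩). Then (V, ⟨·,·,·⟩_{β^n}, β^n ∘ α) is a multiplicative Hom-Jordan supertriple system. -/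
structure IsHomJTS (K : Type*) {V : Type*} [Field K] [AddCommGroup V] [Module K V]
    (𝒱 : ZMod 2 → Submodule K V) (T : V → V → V → V) (θ : V → V) : Prop where
  trilin : IsTrilin K T
  grade : ∀ (i j k : ZMod 2) (x y z : V),
    x ∈ 𝒱 i → y ∈ 𝒱 j → z ∈ 𝒱 k → T x y z ∈ 𝒱 (i + j + k)
  theta_smul : ∀ (c : K) (x : V), θ (c • x) = c • θ x
  theta_add : ∀ x y : V, θ (x + y) = θ x + θ y
  theta_even : ∀ (i : ZMod 2) (x : V), x ∈ 𝒱 i → θ x ∈ 𝒱 i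
  mult : ∀ x y z : V, θ (T x y z) = T (θ x) (θ y) (θ z)
  outer : ∀ (i j k : ZMod 2) (x y z : V), x ∈ 𝒱 i → y ∈ 𝒱 j → z ∈ 𝒱 k →
    T x y z = (sgn K i j * sgn K i k * sgn K j k) • T z y x
  hjts : ∀ (i j p q r : ZMod 2) (x y u v w : V),
    x ∈ 𝒱 i → y ∈ 𝒱 j → u ∈ 𝒱 p → v ∈ 𝒱 q → w ∈ 𝒱 r →
    T (θ x) (θ y) (T u v w) - T (T x y u) (θ v) (θ w)
      = sgn K (i + j) (p + q) •
          (T (θ u) (θ v) (T x y w) - T (θ u) (T v x y) (θ w))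

theorem IsTrilin.comp_linearMap {K V : Type*} [Field K] [AddCommGroup V] [Module K V]
    {T : V → V → V → V} (hT : IsTrilin K T) (γ : V →ₗ[K] V) :
    IsTrilin K (fun x y z => γ (T x y z)) := by
  obtain ⟨h₁, h₂, h₃, h₄, h₅, h₆⟩ := hT
  exact ⟨fun c x y z => by simp only [h₁, map_smul],
    fun x x' y z => by simp only [h₂, map_add],
    fun c x y z => by simp only [h₃, map_smul],
    fun x y y' z => by simp only [h₄, map_add],
    fun c x y z => by simp only [h₅, map_smul],
    fun x y z z' => by simp only [h₆, map_add]⟩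

theorem IsHomJTS.twist {K V : Type*} [Field K] [AddCommGroup V] [Module K V]
    {𝒱 : ZMod 2 → Submodule K V} {T : V → V → V → V} {θ : V → V}
    (h : IsHomJTS K 𝒱 T θ) (γ : V →ₗ[K] V) (hγ𝒱 : ∀ (i : ZMod 2) (x : V), x ∈ 𝒱 i → γ x ∈ 𝒱 i)
    (hγT : ∀ x y z : V, γ (T x y z) = T (γ x) (γ y) (γ z)) (hγθ : ∀ x : V, γ (θ x) = θ (γ x)) :
    IsHomJTS K 𝒱 (fun x y z => γ (T x y z)) (fun x => γ (θ x)) where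
  trilin := h.trilin.comp_linearMap γ
  grade i j k x y z hx hy hz := hγ𝒱 _ _ (h.grade i j k x y z hx hy hz)
  theta_smul c x := by rw [h.theta_smul, map_smul]
  theta_add x y := by rw [h.theta_add, map_add]
  theta_even i x hx := hγ𝒱 i _ (h.theta_even i x hx)
  mult x y z := by simp only [hγθ, hγT, h.mult]
  outer i j k x y z hx hy hz := by rw [h.outer i j k x y z hx hy hz, map_smul]
  hjts i j p q r x y u v w hx hy hu hv hw := by
    have := congrArg (fun t => γ (γ t)) (h.hjts i j p q r x y u v w hx hy hu hv hw)
    simpa only [map_sub, map_smul, hγT, hγθ] using this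

theorem stmt11_general {K V : Type*} [Field K] [AddCommGroup V] [Module K V]
    (𝒱 : ZMod 2 → Submodule K V)
    (T : V → V → V → V) (α : V → V)
    (hJ : IsHomJTS K 𝒱 T α)
    (β : V → V)
    (hβsmul : ∀ (c : K) (x : V), β (c • x) = c • β x)
    (hβadd : ∀ x y : V, β (x + y) = β x + β y)
    (hβeven : ∀ (i : ZMod 2) (x : V), x ∈ 𝒱 i → β x ∈ 𝒱 i)
    (hβT : ∀ x y z : V, β (T x y z) = T (β x) (β y) (β z))
    (hβα : ∀ x : V, β (α x) = α (β x))
    (n : ℕ) :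
    IsHomJTS K 𝒱 (fun x y z => β^[n] (T x y z)) (fun x => β^[n] (α x)) := by
  let βₗ : V →ₗ[K] V := { toFun := β, map_add' := hβadd, map_smul' := hβsmul }
  induction n with
  | zero => simpa using hJ
  | succ n ih =>
    simp only [Function.iterate_succ_apply']
    refine ih.twist βₗ hβeven (fun x y z => ?_) (fun x => ?_)
    · exact (Function.Commute.self_iterate β n _).trans (congrArg _ (hβT x y z))
    · exact (Function.Commute.self_iterate β n _).trans (congrArg _ (hβα x))

/-- Theorem 6.1: twisting a multiplicative Hom-Jordan supertriple system by powers
of an even self-morphism commuting with the twist yields a multiplicative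
Hom-Jordan supertriple system. -/
theorem stmt11 {K V : Type*} [Field K] [AddCommGroup V] [Module K V]
    (𝒱 : ZMod 2 → Submodule K V) (hds : DirectSum.IsInternal 𝒱)
    (T : V → V → V → V) (α : V → V)
    (hJ : IsHomJTS K 𝒱 T α)
    (β : V → V)
    (hβsmul : ∀ (c : K) (x : V), β (c • x) = c • β x)
    (hβadd : ∀ x y : V, β (x + y) = β x + β y)
    (hβeven : ∀ (i : ZMod 2) (x : V), x ∈ 𝒱 i → β x ∈ 𝒱 i)
    (hβT : ∀ x y z : V, β (T x y z) = T (β x) (β y) (β z))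
    (hβα : ∀ x : V, β (α x) = α (β x))
    (n : ℕ) :
    IsHomJTS K 𝒱 (fun x y z => β^[n] (T x y z)) (fun x => β^[n] (α x)) :=
  stmt11_general 𝒱 T α hJ β hβsmul hβadd hβeven hβT hβα n
end

section
/- If (V,⟨·,·,·⟩) is a Jordan supertriple system and β is an even self-morphism of it, then (V, β∘⟨·,·,·⟩, β) is a multiplicative Hom-Jordan supertriple system. -/
/-- A Jordan supertriple system structure. -/
structure IsJTS (K : Type*) {V : Type*} [Field K] [AddCommGroup V] [Module K V]
    (𝒱 : ZMod 2 → Submodule K V) (T : V → V → V → V) : Prop where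
  trilin : IsTrilin K T
  grade : ∀ (i j k : ZMod 2) (x y z : V),
    x ∈ 𝒱 i → y ∈ 𝒱 j → z ∈ 𝒱 k → T x y z ∈ 𝒱 (i + j + k)
  outer : ∀ (i j k : ZMod 2) (x y z : V), x ∈ 𝒱 i → y ∈ 𝒱 j → z ∈ 𝒱 k →
    T x y z = (sgn K i j * sgn K i k * sgn K j k) • T z y x
  jts : ∀ (i j p q r : ZMod 2) (x y u v w : V),
    x ∈ 𝒱 i → y ∈ 𝒱 j → u ∈ 𝒱 p → v ∈ 𝒱 q → w ∈ 𝒱 r →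
    T x y (T u v w) - T (T x y u) v w
      = sgn K (i + j) (p + q) • (T u v (T x y w) - T u (T v x y) w)

/-! Yau twisting: every term of the twisted identity for `f ∘ T` is `f ∘ f` applied to the
corresponding term of the untwisted identity for `T`, because `f` is multiplicative. -/

section YauTwist

variable {K V : Type*} [Field K] [AddCommGroup V] [Module K V]

theorem IsTrilin.linearMap_comp {T : V → V → V → V} (hT : IsTrilin K T) (f : V →ₗ[K] V) :
    IsTrilin K (fun x y z => f (T x y z)) := by
  obtain ⟨h₁, h₂, h₃, h₄, h₅, h₆⟩ := hT
  exact ⟨fun c x y z => by simp only [h₁, map_smul],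
    fun x x' y z => by simp only [h₂, map_add],
    fun c x y z => by simp only [h₃, map_smul],
    fun x y y' z => by simp only [h₄, map_add],
    fun c x y z => by simp only [h₅, map_smul],
    fun x y z z' => by simp only [h₆, map_add]⟩

variable {𝒱 : ZMod 2 → Submodule K V} {T : V → V → V → V}

theorem IsJTS.twist_hjts (hJ : IsJTS K 𝒱 T) (f : V →ₗ[K] V)
    (hf : ∀ x y z, f (T x y z) = T (f x) (f y) (f z))
    (i j p q r : ZMod 2) (x y u v w : V)
    (hx : x ∈ 𝒱 i) (hy : y ∈ 𝒱 j) (hu : u ∈ 𝒱 p) (hv : v ∈ 𝒱 q) (hw : w ∈ 𝒱 r) :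
    f (T (f x) (f y) (f (T u v w))) - f (T (f (T x y u)) (f v) (f w))
      = sgn K (i + j) (p + q) •
          (f (T (f u) (f v) (f (T x y w))) - f (T (f u) (f (T v x y)) (f w))) := by
  simpa only [← hf, map_sub, map_smul] using
    congrArg (fun t => f (f t)) (hJ.jts i j p q r x y u v w hx hy hu hv hw)

theorem IsJTS.isHomJTS_twist (hJ : IsJTS K 𝒱 T) (f : V →ₗ[K] V)
    (hf_even : ∀ (i : ZMod 2) (x : V), x ∈ 𝒱 i → f x ∈ 𝒱 i)
    (hf : ∀ x y z, f (T x y z) = T (f x) (f y) (f z)) :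
    IsHomJTS K 𝒱 (fun x y z => f (T x y z)) f where
  trilin := hJ.trilin.linearMap_comp f
  grade i j k x y z hx hy hz := hf_even _ _ (hJ.grade i j k x y z hx hy hz)
  theta_smul := map_smul f
  theta_add := map_add f
  theta_even := hf_even
  mult x y z := by rw [hf]
  outer i j k x y z hx hy hz := by rw [hJ.outer i j k x y z hx hy hz, map_smul]
  hjts := hJ.twist_hjts f hf

end YauTwist

theorem stmt12_general {K V : Type*} [Field K] [AddCommGroup V] [Module K V]
    (𝒱 : ZMod 2 → Submodule K V)
    (T : V → V → V → V)
    (hJ : IsJTS K 𝒱 T)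
    (β : V → V)
    (hβsmul : ∀ (c : K) (x : V), β (c • x) = c • β x)
    (hβadd : ∀ x y : V, β (x + y) = β x + β y)
    (hβeven : ∀ (i : ZMod 2) (x : V), x ∈ 𝒱 i → β x ∈ 𝒱 i)
    (hβT : ∀ x y z : V, β (T x y z) = T (β x) (β y) (β z)) :
    IsHomJTS K 𝒱 (fun x y z => β (T x y z)) β :=
  hJ.isHomJTS_twist { toFun := β, map_add' := hβadd, map_smul' := hβsmul } hβeven hβT

/-- Corollary 6.1: Yau twisting of a Jordan supertriple system along an even
self-morphism gives a multiplicative Hom-Jordan supertriple system. -/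
theorem stmt12 {K V : Type*} [Field K] [AddCommGroup V] [Module K V]
    (𝒱 : ZMod 2 → Submodule K V) (hds : DirectSum.IsInternal 𝒱)
    (T : V → V → V → V)
    (hJ : IsJTS K 𝒱 T)
    (β : V → V)
    (hβsmul : ∀ (c : K) (x : V), β (c • x) = c • β x)
    (hβadd : ∀ x y : V, β (x + y) = β x + β y)
    (hβeven : ∀ (i : ZMod 2) (x : V), x ∈ 𝒱 i → β x ∈ 𝒱 i)
    (hβT : ∀ x y z : V, β (T x y z) = T (β x) (β y) (β z)) :
    IsHomJTS K 𝒱 (fun x y z => β (T x y z)) β :=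
  stmt12_general 𝒱 T hJ β hβsmul hβadd hβeven hβT
end
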